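/- For every (k,ℓ)-tensor f over ℝ² (symmetric in its first k and last ℓ slots), there exists a (k-1,ℓ-1)-tensor w such that f + (-1)^{ℓ+1} A(Sym(Af)) = λw; equivalently, (-1)^ℓ A ∘ Sym ∘ A equals the identity modulo the image of λ. -/

import Mathlib

open scoped BigOperators
open MeasureTheory

namespace MRT

/-- A multi-index with `n` slots, each ranging over the two coordinate indices of `ℝ²`
(`0` stands for the index "1", `1` stands for the index "2"). -/
abbrev Idx (n : ℕ) := Fin n → Fin 2

/-- A `(k,ℓ)`-tensor over `ℝ²`: a function of `k` first-group and `ℓ` second-group indices. -/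
abbrev Tens (k l : ℕ) := Idx k → Idx l → ℝ

/-- A tensor with `n` (fully interchangeable) slots. -/
abbrev Full (n : ℕ) := Idx n → ℝ

/-- The index swap `δ` exchanging the two coordinate indices. -/
def dswap : Fin 2 → Fin 2 := fun i => 1 - i

/-- `N J` : the number of entries of `J` equal to the first index ("1"). -/
def NJ {n : ℕ} (J : Idx n) : ℕ := (Finset.univ.filter fun j => J j = 0).card

/-- The operator `A`: `(Af)(I,J) = (-1)^(ℓ - N(J)) f(I, δ(J))`. -/
def opA {k l : ℕ} (f : Tens k l) : Tens k l :=
  fun I J => (-1 : ℝ) ^ (l - NJ J) * f I (dswap ∘ J)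

/-- Full symmetrization (average over all permutations of the `n` slots). -/
noncomputable def Sym {n : ℕ} (h : Full n) : Full n :=
  fun I => ((Nat.factorial n : ℝ))⁻¹ * ∑ σ : Equiv.Perm (Fin n), h (I ∘ σ)

/-- Symmetrization over the first index group only. -/
noncomputable def symK {k l : ℕ} (f : Tens k l) : Tens k l :=
  fun I J => ((Nat.factorial k : ℝ))⁻¹ * ∑ σ : Equiv.Perm (Fin k), f (I ∘ σ) J

/-- Symmetrization over the second index group only. -/
noncomputable def symL {k l : ℕ} (f : Tens k l) : Tens k l :=
  fun I J => ((Nat.factorial l : ℝ))⁻¹ * ∑ σ : Equiv.Perm (Fin l), f I (J ∘ σ)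

/-- View a `(k,ℓ)`-tensor as a `(k+ℓ)`-tensor. -/
def toFull {k l : ℕ} (f : Tens k l) : Full (k + l) :=
  fun I => f (fun i => I (Fin.castAdd l i)) (fun j => I (Fin.natAdd k j))

/-- View a `(k+ℓ)`-tensor as a `(k,ℓ)`-tensor. -/
def fromFull {k l : ℕ} (h : Full (k + l)) : Tens k l :=
  fun I J => h (Fin.append I J)

/-- The operator `λ` : symmetrized multiplication with the Euclidean metric `g = δ`. -/
noncomputable def lam {k l : ℕ} (w : Tens k l) : Tens (k + 1) (l + 1) :=
  symK (symL (fun I J =>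
    (if I 0 = J 0 then (1 : ℝ) else 0) * w (Fin.tail I) (Fin.tail J)))

/-- The contraction `v^I = v_{i₁} ⋯ v_{i_n}`. -/
def vpow {n : ℕ} (v : Fin 2 → ℝ) (I : Idx n) : ℝ := ∏ i, v (I i)

/-- The rotation `σ(v) = (v₂, -v₁)`. -/
def rot (v : Fin 2 → ℝ) : Fin 2 → ℝ := ![v 1, -v 0]

/-- Euclidean dot product on `ℝ²`. -/
def dot (x v : Fin 2 → ℝ) : ℝ := x 0 * v 0 + x 1 * v 1

/-- Symmetry in the first `k` and in the last `ℓ` index slots. -/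
def SymmIn {k l : ℕ} (f : Tens k l) : Prop :=
  ∀ (I : Idx k) (J : Idx l) (σ : Equiv.Perm (Fin k)) (τ : Equiv.Perm (Fin l)),
    f (I ∘ σ) (J ∘ τ) = f I J

/-- Smoothness of a tensor field on `ℝ²`, componentwise. -/
def SmoothT {k l : ℕ} (u : (Fin 2 → ℝ) → Tens k l) : Prop :=
  ∀ I J, ContDiff ℝ (⊤ : ℕ∞) fun x => u x I J

/-- The operator `d'` for the flat connection: symmetrized partial derivative placed in the
first index group. -/
noncomputable def dprime {k l : ℕ} (u : (Fin 2 → ℝ) → Tens k l) :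
    (Fin 2 → ℝ) → Tens (k + 1) l :=
  fun x => symK fun I J =>
    fderiv ℝ (fun y => u y (Fin.tail I) J) x (Pi.single (I 0) 1)

/-- The full (flat) covariant derivative of a field of `n`-tensors, derivative slot first. -/
noncomputable def dfull {n : ℕ} (h : (Fin 2 → ℝ) → Full n) :
    (Fin 2 → ℝ) → Full (n + 1) :=
  fun x I => fderiv ℝ (fun y => h y (Fin.tail I)) x (Pi.single (I 0) 1)

/-- The inner derivative `dˢ`: full symmetrization of the derivative, viewed as a
`(k+1,ℓ)`-tensor field. -/
noncomputable def dsym {k l : ℕ} (u : (Fin 2 → ℝ) → Tens k l) :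
    (Fin 2 → ℝ) → Tens (k + 1) l :=
  fun x I J =>
    Sym (dfull (fun y => toFull (u y)) x) (Fin.cons (I 0) (Fin.append (Fin.tail I) J))

/-- The symmetric tensor `(⊗^m dx¹) ⊗_s (⊗^(n-m) dx²)` (averaged symmetrization of the
elementary tensor product with `m` copies of `dx¹` followed by copies of `dx²`). -/
noncomputable def E (n m : ℕ) : Full n :=
  Sym fun I => if ∀ i : Fin n, (I i = 0 ↔ (i : ℕ) < m) then 1 else 0

/-- Membership in the closed unit disc. -/
def inDisc (x : Fin 2 → ℝ) : Prop := x 0 ^ 2 + x 1 ^ 2 ≤ 1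

/-- Membership in the unit circle (the boundary of the disc). -/
def onSphere (x : Fin 2 → ℝ) : Prop := x 0 ^ 2 + x 1 ^ 2 = 1

/-- Unit vectors of `ℝ²`. -/
def unitVec (v : Fin 2 → ℝ) : Prop := v 0 ^ 2 + v 1 ^ 2 = 1

/-- Exit time of the chord `t ↦ x + t v` of the unit disc, `x ∈ ∂D`, `‖v‖ = 1`. -/
noncomputable def tauD (x v : Fin 2 → ℝ) : ℝ := -2 * dot x v

/-- The mixed ray transform `L_{k,ℓ}` on the Euclidean unit disc. -/
noncomputable def Lray {k l : ℕ} (f : (Fin 2 → ℝ) → Tens k l) (x v : Fin 2 → ℝ) : ℝ :=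
  ∫ t in (0:ℝ)..tauD x v,
    ∑ I : Idx k, ∑ J : Idx l, f (x + t • v) I J * vpow v I * vpow (rot v) J

/-- The geodesic (X-ray) transform of a field of symmetric `n`-tensors on the unit disc. -/
noncomputable def Iray {n : ℕ} (h : (Fin 2 → ℝ) → Full n) (x v : Fin 2 → ℝ) : ℝ :=
  ∫ t in (0:ℝ)..tauD x v, ∑ I : Idx n, h (x + t • v) I * vpow v I


-- ############ auxiliary development ############

def Ebi {k l : ℕ} (f : Tens k l) (x y : Fin 2 → ℝ) : ℝ :=
  ∑ I : Idx k, ∑ J : Idx l, f I J * vpow x I * vpow y J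

def Efull {n : ℕ} (h : Full n) (x : Fin 2 → ℝ) : ℝ :=
  ∑ I : Idx n, h I * vpow x I

def tauRot (y : Fin 2 → ℝ) : Fin 2 → ℝ := ![-(y 1), y 0]

lemma vpow_comp {n : ℕ} (x : Fin 2 → ℝ) (I : Idx n) (σ : Equiv.Perm (Fin n)) :
    vpow x (I ∘ σ) = vpow x I := by
  simpa [vpow, Function.comp] using Equiv.prod_comp σ (fun i => x (I i))

lemma NJ_comp {n : ℕ} (J : Idx n) (σ : Equiv.Perm (Fin n)) : NJ (J ∘ σ) = NJ J := by
  unfold NJ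
  apply Finset.card_bij' (fun j _ => σ j) (fun j _ => σ.symm j) <;>
    simp [Function.comp]

lemma NJ_le {n : ℕ} (J : Idx n) : NJ J ≤ n := by
  simpa [NJ] using (Finset.card_filter_le Finset.univ fun j => J j = 0)

lemma sum_perm_const {n : ℕ} (c : ℝ) :
    ((Nat.factorial n : ℝ))⁻¹ * ∑ _σ : Equiv.Perm (Fin n), c = c := by
  rw [Finset.sum_const]
  simp only [Finset.card_univ, Fintype.card_perm, Fintype.card_fin, nsmul_eq_mul]
  rw [← mul_assoc, inv_mul_cancel₀ (by exact_mod_cast Nat.factorial_ne_zero n), one_mul]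

lemma sum_precomp {n : ℕ} (σ : Equiv.Perm (Fin n)) (G : Idx n → ℝ) :
    ∑ I : Idx n, G (I ∘ σ) = ∑ I : Idx n, G I := by
  apply Fintype.sum_bijective (fun I : Idx n => I ∘ σ)
    (Equiv.arrowCongr σ.symm (Equiv.refl (Fin 2))).bijective
  intro I; rfl

lemma Ebi_symK {k l : ℕ} (f : Tens k l) (x y : Fin 2 → ℝ) :
    Ebi (symK f) x y = Ebi f x y := by
  unfold Ebi symK
  simp only [Finset.mul_sum, Finset.sum_mul]
  have h1 : ∀ I : Idx k, ∑ J : Idx l, ∑ σ : Equiv.Perm (Fin k),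
      ((Nat.factorial k : ℝ))⁻¹ * f (I ∘ σ) J * vpow x I * vpow y J
      = ∑ σ : Equiv.Perm (Fin k), ∑ J : Idx l,
      ((Nat.factorial k : ℝ))⁻¹ * f (I ∘ σ) J * vpow x I * vpow y J :=
    fun I => Finset.sum_comm
  rw [Finset.sum_congr rfl (fun I _ => h1 I), Finset.sum_comm]
  have h2 : ∀ σ : Equiv.Perm (Fin k), ∑ I : Idx k, ∑ J : Idx l,
      ((Nat.factorial k : ℝ))⁻¹ * f (I ∘ σ) J * vpow x I * vpow y J
      = ((Nat.factorial k : ℝ))⁻¹ * Ebi f x y := by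
    intro σ
    have : ∀ I : Idx k, ∑ J : Idx l,
        ((Nat.factorial k : ℝ))⁻¹ * f (I ∘ σ) J * vpow x I * vpow y J
        = (fun I' => ∑ J : Idx l,
            ((Nat.factorial k : ℝ))⁻¹ * f I' J * vpow x I' * vpow y J) (I ∘ σ) := by
      intro I; simp only [vpow_comp]
    rw [Finset.sum_congr rfl (fun I _ => this I),
      sum_precomp σ (fun I' => ∑ J : Idx l,
        ((Nat.factorial k : ℝ))⁻¹ * f I' J * vpow x I' * vpow y J)]
    unfold Ebi
    rw [Finset.mul_sum]
    congr 1; ext I; rw [Finset.mul_sum]; congr 1; ext J; ring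
  rw [Finset.sum_congr rfl (fun σ _ => h2 σ), Finset.sum_const]
  simp only [Finset.card_univ, Fintype.card_perm, Fintype.card_fin, nsmul_eq_mul]
  rw [← mul_assoc, mul_inv_cancel₀ (by exact_mod_cast Nat.factorial_ne_zero k), one_mul]
  rfl

lemma Ebi_symL {k l : ℕ} (f : Tens k l) (x y : Fin 2 → ℝ) :
    Ebi (symL f) x y = Ebi f x y := by
  unfold Ebi symL
  simp only [Finset.mul_sum, Finset.sum_mul]
  have h1 : ∀ I : Idx k, ∑ J : Idx l, ∑ σ : Equiv.Perm (Fin l),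
      ((Nat.factorial l : ℝ))⁻¹ * f I (J ∘ σ) * vpow x I * vpow y J
      = ∑ σ : Equiv.Perm (Fin l), ∑ J : Idx l,
      ((Nat.factorial l : ℝ))⁻¹ * f I (J ∘ σ) * vpow x I * vpow y J :=
    fun I => Finset.sum_comm
  rw [Finset.sum_congr rfl (fun I _ => h1 I), Finset.sum_comm]
  have h2 : ∀ σ : Equiv.Perm (Fin l), ∑ I : Idx k, ∑ J : Idx l,
      ((Nat.factorial l : ℝ))⁻¹ * f I (J ∘ σ) * vpow x I * vpow y J
      = ((Nat.factorial l : ℝ))⁻¹ * Ebi f x y := by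
    intro σ
    rw [Finset.sum_comm]
    have : ∀ J : Idx l, ∑ I : Idx k,
        ((Nat.factorial l : ℝ))⁻¹ * f I (J ∘ σ) * vpow x I * vpow y J
        = (fun J' => ∑ I : Idx k,
            ((Nat.factorial l : ℝ))⁻¹ * f I J' * vpow x I * vpow y J') (J ∘ σ) := by
      intro J; simp only [vpow_comp]
    rw [Finset.sum_congr rfl (fun J _ => this J),
      sum_precomp σ (fun J' => ∑ I : Idx k,
        ((Nat.factorial l : ℝ))⁻¹ * f I J' * vpow x I * vpow y J')]
    unfold Ebi
    rw [Finset.mul_sum, Finset.sum_comm]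
    congr 1; ext J; rw [Finset.mul_sum]; congr 1; ext I; ring
  rw [Finset.sum_congr rfl (fun σ _ => h2 σ), Finset.sum_const]
  simp only [Finset.card_univ, Fintype.card_perm, Fintype.card_fin, nsmul_eq_mul]
  rw [← mul_assoc, mul_inv_cancel₀ (by exact_mod_cast Nat.factorial_ne_zero l), one_mul]
  rfl

lemma Efull_Sym {n : ℕ} (h : Full n) (x : Fin 2 → ℝ) :
    Efull (Sym h) x = Efull h x := by
  unfold Efull Sym
  simp only [Finset.mul_sum, Finset.sum_mul]
  rw [Finset.sum_comm]
  have h2 : ∀ σ : Equiv.Perm (Fin n), ∑ I : Idx n,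
      ((Nat.factorial n : ℝ))⁻¹ * h (I ∘ σ) * vpow x I
      = ((Nat.factorial n : ℝ))⁻¹ * Efull h x := by
    intro σ
    have : ∀ I : Idx n, ((Nat.factorial n : ℝ))⁻¹ * h (I ∘ σ) * vpow x I
        = (fun I' => ((Nat.factorial n : ℝ))⁻¹ * h I' * vpow x I') (I ∘ σ) := by
      intro I; simp only [vpow_comp]
    rw [Finset.sum_congr rfl (fun I _ => this I),
      sum_precomp σ (fun I' => ((Nat.factorial n : ℝ))⁻¹ * h I' * vpow x I')]
    unfold Efull
    rw [Finset.mul_sum]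
    congr 1; ext I; ring
  rw [Finset.sum_congr rfl (fun σ _ => h2 σ), Finset.sum_const]
  simp only [Finset.card_univ, Fintype.card_perm, Fintype.card_fin, nsmul_eq_mul]
  rw [← mul_assoc, mul_inv_cancel₀ (by exact_mod_cast Nat.factorial_ne_zero n), one_mul]
  rfl

lemma vpow_append {k l : ℕ} (x : Fin 2 → ℝ) (I : Idx k) (J : Idx l) :
    vpow x (Fin.append I J) = vpow x I * vpow x J := by
  unfold vpow
  rw [← Equiv.prod_comp finSumFinEquiv (fun i => x (Fin.append I J i)), Fintype.prod_sum_type]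
  congr 1
  · exact Finset.prod_congr rfl fun i _ => by simp [Fin.append_left]
  · exact Finset.prod_congr rfl fun j _ => by simp [Fin.append_right]

lemma Efull_toFull {k l : ℕ} (f : Tens k l) (x : Fin 2 → ℝ) :
    Efull (toFull f) x = Ebi f x x := by
  unfold Efull Ebi toFull
  rw [← Finset.sum_product']
  rw [Finset.univ_product_univ]
  rw [← Equiv.sum_comp (Fin.appendEquiv (α := Fin 2) k l).symm
    (fun p : Idx k × Idx l => f p.1 p.2 * vpow x p.1 * vpow x p.2)]
  apply Finset.sum_congr rfl
  intro K _
  have h1 : ((Fin.appendEquiv (α := Fin 2) k l).symm K).1 = fun i => K (Fin.castAdd l i) := rfl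
  have h2 : ((Fin.appendEquiv (α := Fin 2) k l).symm K).2 = fun j => K (Fin.natAdd k j) := rfl
  rw [h1, h2]
  have h3 : Fin.append (fun i => K (Fin.castAdd l i)) (fun j => K (Fin.natAdd k j)) = K := by
    ext i
    refine Fin.addCases (fun i => ?_) (fun j => ?_) i
    · rw [Fin.append_left]
    · rw [Fin.append_right]
  have := vpow_append x (fun i => K (Fin.castAdd l i)) (fun j => K (Fin.natAdd k j))
  rw [h3] at this
  rw [this, mul_assoc]

lemma Ebi_fromFull_diag {k l : ℕ} (h : Full (k + l)) (x : Fin 2 → ℝ) :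
    Ebi (fromFull h) x x = Efull h x := by
  unfold Efull Ebi fromFull
  rw [← Finset.sum_product', Finset.univ_product_univ]
  rw [← Equiv.sum_comp (Fin.appendEquiv (α := Fin 2) k l)
    (fun K : Idx (k + l) => h K * vpow x K)]
  apply Finset.sum_congr rfl
  intro p _
  have : Fin.appendEquiv (α := Fin 2) k l p = Fin.append p.1 p.2 := rfl
  rw [this, vpow_append, mul_assoc]

lemma vpow_neg {n : ℕ} (y : Fin 2 → ℝ) (J : Idx n) :
    vpow (fun i => -(y i)) J = (-1 : ℝ) ^ n * vpow y J := by
  unfold vpow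
  have : ∀ j : Fin n, -(y (J j)) = (-1 : ℝ) * y (J j) := fun j => by ring
  rw [Finset.prod_congr rfl fun j _ => this j, Finset.prod_mul_distrib,
    Finset.prod_const, Finset.card_univ, Fintype.card_fin]

def dswapEquiv (n : ℕ) : Idx n ≃ Idx n where
  toFun J := dswap ∘ J
  invFun J := dswap ∘ J
  left_inv J := by funext j; simp [dswap]
  right_inv J := by funext j; simp [dswap]

lemma NJ_dswap {n : ℕ} (J : Idx n) : NJ (dswap ∘ J) = n - NJ J := by
  unfold NJ
  have h1 : (Finset.univ.filter fun j => (dswap ∘ J) j = 0)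
      = Finset.univ.filter fun j => ¬ (J j = 0) := by
    apply Finset.filter_congr
    intro j _
    have : ∀ a : Fin 2, (dswap a = 0 ↔ ¬ a = 0) := by decide
    simp [Function.comp, this]
  rw [h1]
  have := Finset.card_filter_add_card_filter_not (s := (Finset.univ : Finset (Fin n)))
    (p := fun j => J j = 0)
  rw [Finset.card_univ, Fintype.card_fin] at this
  omega

lemma prod_sign {n : ℕ} (J : Idx n) :
    (∏ j : Fin n, (if J j = 0 then (-1 : ℝ) else 1)) = (-1 : ℝ) ^ NJ J := by
  rw [Finset.prod_ite, Finset.prod_const, Finset.prod_const, one_pow, mul_one]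
  rfl

lemma vpow_tau {n : ℕ} (y : Fin 2 → ℝ) (J : Idx n) :
    vpow (tauRot y) J = (-1 : ℝ) ^ NJ J * vpow y (dswap ∘ J) := by
  unfold vpow
  have : ∀ j : Fin n, tauRot y (J j)
      = (if J j = 0 then (-1 : ℝ) else 1) * y (dswap (J j)) := by
    intro j
    have : ∀ c : Fin 2, tauRot y c = (if c = 0 then (-1 : ℝ) else 1) * y (dswap c) := by
      intro c
      fin_cases c <;> simp [tauRot, dswap]
    exact this (J j)
  rw [Finset.prod_congr rfl fun j _ => this j, Finset.prod_mul_distrib, prod_sign]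
  rfl

lemma Ebi_opA {k l : ℕ} (g : Tens k l) (x y : Fin 2 → ℝ) :
    Ebi (opA g) x y = Ebi g x (tauRot y) := by
  unfold Ebi opA
  apply Finset.sum_congr rfl
  intro I _
  rw [← Equiv.sum_comp (dswapEquiv l)
    (fun J : Idx l => g I J * vpow x I * vpow (tauRot y) J)]
  apply Finset.sum_congr rfl
  intro J _
  have e1 : (dswapEquiv l) J = dswap ∘ J := rfl
  rw [e1, vpow_tau, NJ_dswap]
  have e2 : dswap ∘ (dswap ∘ J) = J := by funext j; simp [dswap]
  rw [e2]
  ring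

lemma tau_tau (y : Fin 2 → ℝ) : tauRot (tauRot y) = fun i => -(y i) := by
  funext i
  fin_cases i <;> simp [tauRot]

lemma Ebi_add_smul {k l : ℕ} (f g : Tens k l) (c : ℝ) (x y : Fin 2 → ℝ) :
    Ebi (fun I J => f I J + c * g I J) x y = Ebi f x y + c * Ebi g x y := by
  unfold Ebi
  rw [Finset.mul_sum, ← Finset.sum_add_distrib]
  apply Finset.sum_congr rfl
  intro I _
  rw [Finset.mul_sum, ← Finset.sum_add_distrib]
  apply Finset.sum_congr rfl
  intro J _
  ring

lemma Ebi_Q_vanish {k l : ℕ} (f : Tens (k + 1) (l + 1)) (x : Fin 2 → ℝ) :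
    Ebi (fun I J => f I J
      + (-1 : ℝ) ^ (l + 1 + 1) * opA (fromFull (Sym (toFull (opA f)))) I J) x (tauRot x)
      = 0 := by
  rw [Ebi_add_smul]
  rw [Ebi_opA, tau_tau]
  have hG : Ebi (fromFull (Sym (toFull (opA f)))) x (fun i => -(x i))
      = (-1 : ℝ) ^ (l + 1) * Ebi f x (tauRot x) := by
    have h1 : Ebi (fromFull (Sym (toFull (opA f)))) x (fun i => -(x i))
        = (-1 : ℝ) ^ (l + 1) * Ebi (fromFull (Sym (toFull (opA f)))) x x := by
      unfold Ebi
      rw [Finset.mul_sum]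
      apply Finset.sum_congr rfl
      intro I _
      rw [Finset.mul_sum]
      apply Finset.sum_congr rfl
      intro J _
      rw [vpow_neg]
      ring
    rw [h1, Ebi_fromFull_diag, Efull_Sym, Efull_toFull, Ebi_opA]
  rw [hG]
  have : (-1 : ℝ) ^ (l + 1 + 1) * ((-1 : ℝ) ^ (l + 1) * Ebi f x (tauRot x))
      = - Ebi f x (tauRot x) := by
    rw [← mul_assoc, ← pow_add]
    have hodd : Odd (l + 1 + 1 + (l + 1)) := ⟨l + 1, by ring⟩
    rw [hodd.neg_one_pow]
    ring
  rw [this]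
  ring

lemma SymmIn_opA {k l : ℕ} (g : Tens k l) (hg : SymmIn g) : SymmIn (opA g) := by
  intro I J σ τ
  unfold opA
  rw [NJ_comp]
  have : dswap ∘ (J ∘ τ) = (dswap ∘ J) ∘ τ := rfl
  rw [this, hg I (dswap ∘ J) σ τ]

lemma Sym_precomp {n : ℕ} (h : Full n) (I : Idx n) (π : Equiv.Perm (Fin n)) :
    Sym h (I ∘ π) = Sym h I := by
  unfold Sym
  congr 1
  apply Fintype.sum_bijective (fun σ => π * σ) (Group.mulLeft_bijective π)
  intro σ
  congr 1

lemma append_comp {k l : ℕ} (I : Idx k) (J : Idx l)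
    (σ : Equiv.Perm (Fin k)) (τ : Equiv.Perm (Fin l)) :
    ∃ π : Equiv.Perm (Fin (k + l)),
      Fin.append (I ∘ σ) (J ∘ τ) = Fin.append I J ∘ π := by
  refine ⟨finSumFinEquiv.symm.trans ((Equiv.sumCongr σ τ).trans finSumFinEquiv), ?_⟩
  funext i
  refine Fin.addCases (fun i => ?_) (fun j => ?_) i
  · have h1 : (finSumFinEquiv.symm.trans ((Equiv.sumCongr σ τ).trans finSumFinEquiv))
        (Fin.castAdd l i) = Fin.castAdd l (σ i) := by
      simp [finSumFinEquiv_symm_apply_castAdd]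
    simp only [Function.comp, h1, Fin.append_left]
  · have h1 : (finSumFinEquiv.symm.trans ((Equiv.sumCongr σ τ).trans finSumFinEquiv))
        (Fin.natAdd k j) = Fin.natAdd k (τ j) := by
      simp [finSumFinEquiv_symm_apply_natAdd]
    simp only [Function.comp, h1, Fin.append_right]

lemma SymmIn_fromFull_Sym {k l : ℕ} (h : Full (k + l)) : SymmIn (fromFull (Sym h)) := by
  intro I J σ τ
  unfold fromFull
  obtain ⟨π, hπ⟩ := append_comp I J σ τ
  rw [hπ, Sym_precomp]

lemma symK_precomp {k l : ℕ} (f : Tens k l) (I : Idx k) (J : Idx l)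
    (σ : Equiv.Perm (Fin k)) : symK f (I ∘ σ) J = symK f I J := by
  unfold symK
  congr 1
  apply Fintype.sum_bijective (fun σ' => σ * σ') (Group.mulLeft_bijective σ)
  intro σ'
  congr 1

lemma symL_precomp {k l : ℕ} (f : Tens k l) (I : Idx k) (J : Idx l)
    (τ : Equiv.Perm (Fin l)) : symL f I (J ∘ τ) = symL f I J := by
  unfold symL
  congr 1
  apply Fintype.sum_bijective (fun τ' => τ * τ') (Group.mulLeft_bijective τ)
  intro τ'
  congr 1

lemma SymmIn_symKL {k l : ℕ} (f : Tens k l) : SymmIn (symK (symL f)) := by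
  intro I J σ τ
  rw [symK_precomp]
  have : ∀ I', symK (symL f) I' (J ∘ τ) = symK (symL f) I' J := by
    intro I'
    unfold symK
    congr 1
    apply Finset.sum_congr rfl
    intro σ' _
    rw [symL_precomp]
  rw [this]

lemma SymmIn_lam {k l : ℕ} (w : Tens k l) : SymmIn (lam w) := SymmIn_symKL _

lemma SymmIn_add_smul {k l : ℕ} (f g : Tens k l) (c : ℝ)
    (hf : SymmIn f) (hg : SymmIn g) :
    SymmIn (fun I J => f I J + c * g I J) := by
  intro I J σ τ
  simp only [hf I J σ τ, hg I J σ τ]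

def rep (n a : ℕ) : Idx n := fun i => if (i : ℕ) < a then 0 else 1

lemma NJ_rep {n a : ℕ} (ha : a ≤ n) : NJ (rep n a) = a := by
  unfold NJ rep
  have h1 : (Finset.univ.filter fun i : Fin n => (if (i : ℕ) < a then (0 : Fin 2) else 1) = 0)
      = Finset.univ.filter fun i : Fin n => (i : ℕ) < a := by
    apply Finset.filter_congr
    intro i _
    constructor
    · intro h
      by_contra hc
      simp [hc] at h
    · intro h
      simp [h]
  rw [h1]
  have h2 : (Finset.univ.filter fun i : Fin n => (i : ℕ) < a)
      = Finset.univ.map (Fin.castLEEmb ha) := by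
    ext i
    simp only [Finset.mem_filter, Finset.mem_univ, true_and, Finset.mem_map,
      Fin.castLEEmb_apply]
    constructor
    · intro h
      exact ⟨⟨(i : ℕ), h⟩, by ext; simp⟩
    · rintro ⟨j, rfl⟩
      simpa using j.2
  rw [h2, Finset.card_map, Finset.card_univ, Fintype.card_fin]

lemma exists_perm_of_NJ_eq {n : ℕ} (I I' : Idx n) (h : NJ I = NJ I') :
    ∃ σ : Equiv.Perm (Fin n), I' ∘ σ = I := by
  classical
  have hc0 : Fintype.card {i // I' i = 0} = Fintype.card {i // I i = 0} := by
    rw [Fintype.card_subtype, Fintype.card_subtype]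
    exact h.symm
  have hc1 : Fintype.card {i // ¬ I' i = 0} = Fintype.card {i // ¬ I i = 0} := by
    rw [Fintype.card_subtype_compl, Fintype.card_subtype_compl, hc0]
  let e0 : {i // I i = 0} ≃ {i // I' i = 0} := Fintype.equivOfCardEq hc0.symm
  let e1 : {i // ¬ I i = 0} ≃ {i // ¬ I' i = 0} := Fintype.equivOfCardEq hc1.symm
  refine ⟨(Equiv.sumCompl (fun i => I i = 0)).symm.trans
    ((e0.sumCongr e1).trans (Equiv.sumCompl fun i => I' i = 0)), ?_⟩
  funext i
  by_cases hi : I i = 0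
  · have h1 : (Equiv.sumCompl (fun i => I i = 0)).symm i = Sum.inl ⟨i, hi⟩ :=
      Equiv.sumCompl_symm_apply_of_pos (p := fun i => I i = 0) hi
    simp only [Function.comp, Equiv.trans_apply, h1, Equiv.sumCongr_apply, Sum.map_inl,
      Equiv.sumCompl_apply_inl]
    rw [(e0 ⟨i, hi⟩).2, hi]
  · have h1 : (Equiv.sumCompl (fun i => I i = 0)).symm i = Sum.inr ⟨i, hi⟩ :=
      Equiv.sumCompl_symm_apply_of_neg (p := fun i => I i = 0) hi
    simp only [Function.comp, Equiv.trans_apply, h1, Equiv.sumCongr_apply, Sum.map_inr,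
      Equiv.sumCompl_apply_inr]
    have h2 : ∀ a : Fin 2, ¬ a = 0 → a = 1 := by decide
    rw [h2 _ (e1 ⟨i, hi⟩).2, h2 _ hi]

lemma entry_reduce {k l : ℕ} (T : Tens k l) (hT : SymmIn T) (I : Idx k) (J : Idx l) :
    T I J = T (rep k (NJ I)) (rep l (NJ J)) := by
  obtain ⟨σ, hσ⟩ := exists_perm_of_NJ_eq I (rep k (NJ I)) (by rw [NJ_rep (NJ_le I)])
  obtain ⟨τ, hτ⟩ := exists_perm_of_NJ_eq J (rep l (NJ J)) (by rw [NJ_rep (NJ_le J)])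
  calc T I J = T (rep k (NJ I) ∘ σ) (rep l (NJ J) ∘ τ) := by rw [hσ, hτ]
    _ = T (rep k (NJ I)) (rep l (NJ J)) := hT _ _ σ τ

lemma vpow_NJ {n : ℕ} (x : Fin 2 → ℝ) (I : Idx n) :
    vpow x I = x 0 ^ NJ I * x 1 ^ (n - NJ I) := by
  unfold vpow
  rw [← Finset.prod_filter_mul_prod_filter_not Finset.univ (fun i => I i = 0)]
  congr 1
  · rw [Finset.prod_congr rfl (fun i hi => by
      rw [(Finset.mem_filter.mp hi).2]), Finset.prod_const]
    rfl
  · rw [Finset.prod_congr rfl (fun i hi => by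
      have h2 : ∀ a : Fin 2, ¬ a = 0 → a = 1 := by decide
      rw [h2 _ (Finset.mem_filter.mp hi).2]), Finset.prod_const]
    congr 1
    have := Finset.card_filter_add_card_filter_not
      (s := (Finset.univ : Finset (Fin n))) (p := fun i => I i = 0)
    rw [Finset.card_univ, Fintype.card_fin] at this
    unfold NJ
    omega

noncomputable def Nc (n a : ℕ) : ℝ :=
  ((Finset.univ.filter fun I : Idx n => NJ I = a).card : ℝ)

lemma Nc_ne_zero {n a : ℕ} (ha : a ≤ n) : Nc n a ≠ 0 := by
  unfold Nc
  have : rep n a ∈ Finset.univ.filter fun I : Idx n => NJ I = a := by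
    simp [NJ_rep ha]
  have hcard := Finset.card_ne_zero_of_mem this
  exact_mod_cast hcard

lemma groupSum {n : ℕ} (G : ℕ → ℝ) :
    ∑ I : Idx n, G (NJ I) = ∑ a ∈ Finset.range (n + 1), Nc n a * G a := by
  rw [← Finset.sum_fiberwise_of_maps_to (g := NJ) (t := Finset.range (n + 1))
    (fun I _ => Finset.mem_range.mpr (Nat.lt_succ_of_le (NJ_le I)))]
  apply Finset.sum_congr rfl
  intro a _
  rw [Finset.sum_congr rfl (fun I hI => by rw [(Finset.mem_filter.mp hI).2]),
    Finset.sum_const, nsmul_eq_mul]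
  rfl

lemma Ebi_grouped {k l : ℕ} (S : Tens k l) (s : ℕ → ℕ → ℝ)
    (hS : ∀ I J, S I J = s (NJ I) (NJ J)) (x y : Fin 2 → ℝ) :
    Ebi S x y = ∑ a ∈ Finset.range (k + 1), ∑ b ∈ Finset.range (l + 1),
      Nc k a * Nc l b * s a b *
        (x 0 ^ a * x 1 ^ (k - a) * (y 0 ^ b * y 1 ^ (l - b))) := by
  unfold Ebi
  have step1 : ∀ I : Idx k, ∑ J : Idx l, S I J * vpow x I * vpow y J
      = (fun a => ∑ b ∈ Finset.range (l + 1), Nc l b * (s a b *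
          (x 0 ^ a * x 1 ^ (k - a) * (y 0 ^ b * y 1 ^ (l - b))))) (NJ I) := by
    intro I
    simp only
    rw [← groupSum (n := l) (fun b => s (NJ I) b *
      (x 0 ^ NJ I * x 1 ^ (k - NJ I) * (y 0 ^ b * y 1 ^ (l - b))))]
    apply Finset.sum_congr rfl
    intro J _
    rw [hS, vpow_NJ x I, vpow_NJ y J]
    ring
  rw [Finset.sum_congr rfl (fun I _ => step1 I)]
  rw [groupSum (n := k) (fun a => ∑ b ∈ Finset.range (l + 1), Nc l b * (s a b *
      (x 0 ^ a * x 1 ^ (k - a) * (y 0 ^ b * y 1 ^ (l - b)))))]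
  apply Finset.sum_congr rfl
  intro a _
  rw [Finset.mul_sum]
  apply Finset.sum_congr rfl
  intro b _
  ring

lemma poly_vanish (m : ℕ) (c : ℕ → ℝ)
    (h : ∀ u : ℝ, ∑ e ∈ Finset.range m, c e * u ^ e = 0) :
    ∀ e, e < m → c e = 0 := by
  intro e he
  set p : Polynomial ℝ := ∑ e ∈ Finset.range m, Polynomial.C (c e) * Polynomial.X ^ e with hp
  have hev : ∀ u : ℝ, p.eval u = 0 := by
    intro u
    rw [hp, Polynomial.eval_finset_sum]
    simpa using h u
  have hp0 : p = 0 := by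
    apply Polynomial.funext
    intro r
    simp [hev r]
  have : p.coeff e = c e := by
    rw [hp, Polynomial.finset_sum_coeff]
    rw [Finset.sum_congr rfl (fun i _ => by
      rw [Polynomial.coeff_C_mul, Polynomial.coeff_X_pow])]
    simp [Finset.sum_ite_eq, he]
  rw [hp0] at this
  simpa using this.symm

lemma poly_vanish2 (m1 m2 : ℕ) (c : ℕ → ℕ → ℝ)
    (h : ∀ u v : ℝ, ∑ a ∈ Finset.range m1, ∑ b ∈ Finset.range m2,
      c a b * u ^ a * v ^ b = 0) :
    ∀ a b, a < m1 → b < m2 → c a b = 0 := by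
  intro a b ha hb
  have h1 : ∀ u : ℝ, ∀ b', b' < m2 → (∑ a ∈ Finset.range m1, c a b' * u ^ a) = 0 := by
    intro u
    apply poly_vanish m2 (fun b' => ∑ a ∈ Finset.range m1, c a b' * u ^ a)
    intro v
    rw [← h u v, Finset.sum_comm]
    apply Finset.sum_congr rfl
    intro b' _
    rw [Finset.sum_mul]
  exact poly_vanish m1 (fun a => c a b) (fun u => h1 u b hb) a ha

lemma vpow_cons {n : ℕ} (x : Fin 2 → ℝ) (c : Fin 2) (I : Idx n) :
    vpow x (Fin.cons c I) = x c * vpow x I := by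
  unfold vpow
  rw [Fin.prod_univ_succ]
  simp [Fin.cons_succ, Fin.cons_zero]

lemma sum_cons {n : ℕ} (g : Idx (n + 1) → ℝ) :
    ∑ I : Idx (n + 1), g I = ∑ c : Fin 2, ∑ I' : Idx n, g (Fin.cons c I') := by
  rw [← Equiv.sum_comp (Fin.consEquiv (fun _ : Fin (n + 1) => Fin 2)) g,
    Fintype.sum_prod_type]
  rfl

lemma Ebi_lam {k l : ℕ} (w : Tens k l) (x y : Fin 2 → ℝ) :
    Ebi (lam w) x y = (x 0 * y 0 + x 1 * y 1) * Ebi w x y := by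
  unfold lam
  rw [Ebi_symK, Ebi_symL]
  unfold Ebi
  rw [sum_cons (fun I => ∑ J : Idx (l + 1),
    (if I 0 = J 0 then (1 : ℝ) else 0) * w (Fin.tail I) (Fin.tail J)
      * vpow x I * vpow y J)]
  have inner : ∀ (c : Fin 2) (I' : Idx k),
      (∑ J : Idx (l + 1), (if ((Fin.cons c I' : Idx (k + 1))) 0 = J 0 then (1 : ℝ) else 0)
        * w (Fin.tail (Fin.cons c I' : Idx (k + 1))) (Fin.tail J)
        * vpow x (Fin.cons c I' : Idx (k + 1)) * vpow y J)
      = ∑ d : Fin 2, ∑ J' : Idx l, (if c = d then (1 : ℝ) else 0)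
          * w I' J' * (x c * vpow x I') * (y d * vpow y J') := by
    intro c I'
    rw [sum_cons (fun J => (if ((Fin.cons c I' : Idx (k + 1))) 0 = J 0 then (1 : ℝ) else 0)
      * w (Fin.tail (Fin.cons c I' : Idx (k + 1))) (Fin.tail J)
      * vpow x (Fin.cons c I' : Idx (k + 1)) * vpow y J)]
    apply Finset.sum_congr rfl
    intro d _
    apply Finset.sum_congr rfl
    intro J' _
    rw [vpow_cons, vpow_cons]
    simp only [Fin.cons_zero, Fin.tail_cons]
  simp only [inner]
  have key : ∀ (c d : Fin 2),
      (∑ I' : Idx k, ∑ J' : Idx l,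
        w I' J' * (x c * vpow x I') * (y d * vpow y J'))
      = (x c * y d) * Ebi w x y := by
    intro c d
    unfold Ebi
    rw [Finset.mul_sum]
    apply Finset.sum_congr rfl
    intro I' _
    rw [Finset.mul_sum]
    apply Finset.sum_congr rfl
    intro J' _
    ring
  have expand : ∀ (c : Fin 2), ∑ I' : Idx k, ∑ d : Fin 2, ∑ J' : Idx l,
      (if c = d then (1 : ℝ) else 0) * w I' J' * (x c * vpow x I') * (y d * vpow y J')
      = ∑ d : Fin 2, (if c = d then (1 : ℝ) else 0) * ((x c * y d) * Ebi w x y) := by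
    intro c
    rw [Finset.sum_comm]
    apply Finset.sum_congr rfl
    intro d _
    rw [← key c d, Finset.mul_sum]
    apply Finset.sum_congr rfl
    intro I' _
    rw [Finset.mul_sum]
    apply Finset.sum_congr rfl
    intro J' _
    ring
  simp only [expand]
  rw [Fin.sum_univ_two, Fin.sum_univ_two, Fin.sum_univ_two]
  norm_num
  unfold Ebi
  ring

lemma neg_one_pow_sub (b j : ℕ) (h : j ≤ b) : (-1 : ℝ) ^ (b - j) = (-1) ^ b * (-1) ^ j := by
  have h2 : (-1 : ℝ) ^ j * (-1) ^ j = 1 := by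
    rw [← pow_add]
    exact Even.neg_one_pow ⟨j, rfl⟩
  have h3 : (-1 : ℝ) ^ b = (-1) ^ (b - j) * (-1) ^ j := by
    rw [← pow_add]
    congr 1
    omega
  rw [h3, mul_assoc, h2, mul_one]

lemma construct {k l : ℕ} (T : Tens (k + 1) (l + 1)) (hT : SymmIn T)
    (hv : ∀ x : Fin 2 → ℝ, Ebi T x (tauRot x) = 0) :
    ∃ w : Tens k l, ∀ I J, T I J = lam w I J := by
  classical
  set t : ℕ → ℕ → ℝ := fun a b => T (rep (k + 1) a) (rep (l + 1) b) with ht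
  set th : ℕ → ℕ → ℝ := fun a b => Nc (k + 1) a * Nc (l + 1) b * t a b with hth
  have hTe : ∀ I J, T I J = t (NJ I) (NJ J) := fun I J => entry_reduce T hT I J
  have hgrp : ∀ x y : Fin 2 → ℝ, Ebi T x y
      = ∑ a ∈ Finset.range (k + 1 + 1), ∑ b ∈ Finset.range (l + 1 + 1),
        th a b * (x 0 ^ a * x 1 ^ (k + 1 - a) * (y 0 ^ b * y 1 ^ (l + 1 - b))) := by
    intro x y
    rw [Ebi_grouped T t hTe x y]
  set c : ℕ → ℝ := fun e =>
    ∑ p ∈ (Finset.range (k + 1 + 1) ×ˢ Finset.range (l + 1 + 1)).filter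
        (fun p => p.1 + (l + 1 - p.2) = e), (-1 : ℝ) ^ p.2 * th p.1 p.2 with hc
  have hce : ∀ e, e < k + l + 3 → c e = 0 := by
    apply poly_vanish
    intro u
    have hmaps : ∀ p ∈ Finset.range (k + 1 + 1) ×ˢ Finset.range (l + 1 + 1),
        p.1 + (l + 1 - p.2) ∈ Finset.range (k + l + 3) := by
      intro p hp
      rw [Finset.mem_product, Finset.mem_range, Finset.mem_range] at hp
      rw [Finset.mem_range]
      omega
    have h1 : ∑ e ∈ Finset.range (k + l + 3), c e * u ^ e
        = ∑ p ∈ Finset.range (k + 1 + 1) ×ˢ Finset.range (l + 1 + 1),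
            (-1 : ℝ) ^ p.2 * th p.1 p.2 * u ^ (p.1 + (l + 1 - p.2)) := by
      rw [← Finset.sum_fiberwise_of_maps_to hmaps
        (fun p => (-1 : ℝ) ^ p.2 * th p.1 p.2 * u ^ (p.1 + (l + 1 - p.2)))]
      apply Finset.sum_congr rfl
      intro e _
      rw [hc]
      simp only
      rw [Finset.sum_mul]
      apply Finset.sum_congr rfl
      intro p hp
      rw [Finset.mem_filter] at hp
      rw [hp.2]
    have h2 : ∑ p ∈ Finset.range (k + 1 + 1) ×ˢ Finset.range (l + 1 + 1),
        (-1 : ℝ) ^ p.2 * th p.1 p.2 * u ^ (p.1 + (l + 1 - p.2))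
        = Ebi T ![u, 1] (tauRot ![u, 1]) := by
      rw [hgrp, Finset.sum_product]
      apply Finset.sum_congr rfl
      intro a _
      apply Finset.sum_congr rfl
      intro b _
      have e0 : (![u, (1 : ℝ)]) 0 = u := rfl
      have e1 : (![u, (1 : ℝ)]) 1 = 1 := rfl
      have f0 : (tauRot ![u, 1]) 0 = -1 := by simp [tauRot]
      have f1 : (tauRot ![u, 1]) 1 = u := by simp [tauRot]
      rw [e0, e1, f0, f1, pow_add]
      ring
    rw [h1, h2, hv]
  have hbd : ∀ a b, a ≤ k + 1 → b ≤ l + 1 → (a = k + 1 ∨ b = l + 1) →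
      ∑ j ∈ Finset.range (min a b + 1), (-1 : ℝ) ^ j * th (a - j) (b - j) = 0 := by
    intro a b ha hb hor
    have hc0 := hce (a + (l + 1 - b)) (by omega)
    have hbij : c (a + (l + 1 - b))
        = (-1 : ℝ) ^ b * ∑ j ∈ Finset.range (min a b + 1),
            (-1 : ℝ) ^ j * th (a - j) (b - j) := by
      rw [hc, Finset.mul_sum]
      simp only
      refine Finset.sum_nbij' (fun p => a - p.1) (fun j => (a - j, b - j)) ?_ ?_ ?_ ?_ ?_
      · intro p hp
        rw [Finset.mem_filter, Finset.mem_product, Finset.mem_range, Finset.mem_range] at hp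
        show a - p.1 ∈ Finset.range (min a b + 1)
        rw [Finset.mem_range]
        omega
      · intro j hj
        rw [Finset.mem_range] at hj
        show (a - j, b - j) ∈ Finset.filter _ _
        rw [Finset.mem_filter, Finset.mem_product, Finset.mem_range, Finset.mem_range]
        refine ⟨⟨by omega, by omega⟩, by omega⟩
      · intro p hp
        rw [Finset.mem_filter, Finset.mem_product, Finset.mem_range, Finset.mem_range] at hp
        show (a - (a - p.1), b - (a - p.1)) = p
        have h1 : a - (a - p.1) = p.1 ∧ b - (a - p.1) = p.2 := by omega
        rw [Prod.ext_iff]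
        exact ⟨h1.1, h1.2⟩
      · intro j hj
        rw [Finset.mem_range] at hj
        show a - (a - j) = j
        omega
      · intro p hp
        rw [Finset.mem_filter, Finset.mem_product, Finset.mem_range, Finset.mem_range] at hp
        have h1 : a - (a - p.1) = p.1 := by omega
        have h2 : b - (a - p.1) = p.2 := by omega
        have h3 : p.2 = b - (a - p.1) := by omega
        rw [h1, h2, h3, neg_one_pow_sub b (a - p.1) (by omega)]
        ring
    rw [hbij] at hc0
    rcases mul_eq_zero.mp hc0 with h | h
    · exact absurd h (by positivity)
    · exact h
  set uh : ℕ → ℕ → ℝ := fun a b => if a ≤ k ∧ b ≤ l then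
      ∑ j ∈ Finset.range (min a b + 1), (-1 : ℝ) ^ j * th (a - j) (b - j) else 0 with huh
  have hrec : ∀ a b, a ≤ k + 1 → b ≤ l + 1 →
      th a b = (if 1 ≤ a ∧ 1 ≤ b then uh (a - 1) (b - 1) else 0) + uh a b := by
    intro a b ha hb
    by_cases hab : a ≤ k ∧ b ≤ l
    · by_cases h1 : 1 ≤ a ∧ 1 ≤ b
      · rw [if_pos h1]
        have huha : uh a b = ∑ j ∈ Finset.range ((min (a - 1) (b - 1) + 1) + 1),
            (-1 : ℝ) ^ j * th (a - j) (b - j) := by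
          rw [huh]
          simp only
          rw [if_pos hab, show min a b + 1 = (min (a - 1) (b - 1) + 1) + 1 by omega]
        have huhb : uh (a - 1) (b - 1) = ∑ j ∈ Finset.range (min (a - 1) (b - 1) + 1),
            (-1 : ℝ) ^ j * th (a - 1 - j) (b - 1 - j) := by
          rw [huh]
          simp only
          rw [if_pos (by omega : a - 1 ≤ k ∧ b - 1 ≤ l)]
        rw [huha, Finset.sum_range_succ'
          (fun j => (-1 : ℝ) ^ j * th (a - j) (b - j)) (min (a - 1) (b - 1) + 1)]
        have hcg : ∑ j ∈ Finset.range (min (a - 1) (b - 1) + 1),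
            (-1 : ℝ) ^ (j + 1) * th (a - (j + 1)) (b - (j + 1))
            = - uh (a - 1) (b - 1) := by
          rw [huhb, ← Finset.sum_neg_distrib]
          apply Finset.sum_congr rfl
          intro j _
          rw [show a - (j + 1) = a - 1 - j by omega, show b - (j + 1) = b - 1 - j by omega,
            pow_succ]
          ring
        rw [hcg]
        simp
      · rw [if_neg h1]
        have : uh a b = th a b := by
          rw [huh]
          simp only
          rw [if_pos hab, show min a b = 0 by omega, Finset.sum_range_one]
          simp
        rw [this]
        ring
    · have hor : a = k + 1 ∨ b = l + 1 := by omega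
      have huh0 : uh a b = 0 := by rw [huh]; simp only; rw [if_neg hab]
      rw [huh0]
      by_cases h1 : 1 ≤ a ∧ 1 ≤ b
      · rw [if_pos h1]
        have hb0 := hbd a b ha hb hor
        rw [show min a b + 1 = (min (a - 1) (b - 1) + 1) + 1 by omega,
          Finset.sum_range_succ'
            (fun j => (-1 : ℝ) ^ j * th (a - j) (b - j)) (min (a - 1) (b - 1) + 1)] at hb0
        have huhb : uh (a - 1) (b - 1) = ∑ j ∈ Finset.range (min (a - 1) (b - 1) + 1),
            (-1 : ℝ) ^ j * th (a - 1 - j) (b - 1 - j) := by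
          rw [huh]
          simp only
          rw [if_pos (by omega : a - 1 ≤ k ∧ b - 1 ≤ l)]
        have hcg : ∑ j ∈ Finset.range (min (a - 1) (b - 1) + 1),
            (-1 : ℝ) ^ (j + 1) * th (a - (j + 1)) (b - (j + 1))
            = - uh (a - 1) (b - 1) := by
          rw [huhb, ← Finset.sum_neg_distrib]
          apply Finset.sum_congr rfl
          intro j _
          rw [show a - (j + 1) = a - 1 - j by omega, show b - (j + 1) = b - 1 - j by omega,
            pow_succ]
          ring
        rw [hcg] at hb0
        simp at hb0
        linarith
      · rw [if_neg h1]
        have hb0 := hbd a b ha hb hor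
        rw [show min a b = 0 by omega, Finset.sum_range_one] at hb0
        simp at hb0
        linarith
  set w : Tens k l := fun I J => uh (NJ I) (NJ J) / (Nc k (NJ I) * Nc l (NJ J)) with hw
  have hEw : ∀ x y : Fin 2 → ℝ, Ebi w x y
      = ∑ a ∈ Finset.range (k + 1), ∑ b ∈ Finset.range (l + 1),
        uh a b * (x 0 ^ a * x 1 ^ (k - a) * (y 0 ^ b * y 1 ^ (l - b))) := by
    intro x y
    rw [Ebi_grouped w (fun a b => uh a b / (Nc k a * Nc l b)) (fun I J => rfl) x y]
    apply Finset.sum_congr rfl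
    intro a haa
    apply Finset.sum_congr rfl
    intro b hbb
    rw [Finset.mem_range] at haa hbb
    have hNa : Nc k a ≠ 0 := Nc_ne_zero (by omega)
    have hNb : Nc l b ≠ 0 := Nc_ne_zero (by omega)
    field_simp
  have hET : ∀ x y : Fin 2 → ℝ, Ebi (lam w) x y = Ebi T x y := by
    intro x y
    rw [Ebi_lam, hEw, hgrp]
    have hsplit : ∀ a b : ℕ, a ≤ k + 1 → b ≤ l + 1 →
        th a b * (x 0 ^ a * x 1 ^ (k + 1 - a) * (y 0 ^ b * y 1 ^ (l + 1 - b)))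
        = (if 1 ≤ a ∧ 1 ≤ b then uh (a - 1) (b - 1) else 0)
            * (x 0 ^ a * x 1 ^ (k + 1 - a) * (y 0 ^ b * y 1 ^ (l + 1 - b)))
          + uh a b * (x 0 ^ a * x 1 ^ (k + 1 - a) * (y 0 ^ b * y 1 ^ (l + 1 - b))) := by
      intro a b ha hb
      rw [hrec a b ha hb]
      ring
    have hstep : ∑ a ∈ Finset.range (k + 1 + 1), ∑ b ∈ Finset.range (l + 1 + 1),
        th a b * (x 0 ^ a * x 1 ^ (k + 1 - a) * (y 0 ^ b * y 1 ^ (l + 1 - b)))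
        = (∑ a ∈ Finset.range (k + 1 + 1), ∑ b ∈ Finset.range (l + 1 + 1),
            (if 1 ≤ a ∧ 1 ≤ b then uh (a - 1) (b - 1) else 0)
              * (x 0 ^ a * x 1 ^ (k + 1 - a) * (y 0 ^ b * y 1 ^ (l + 1 - b))))
          + ∑ a ∈ Finset.range (k + 1 + 1), ∑ b ∈ Finset.range (l + 1 + 1),
            uh a b * (x 0 ^ a * x 1 ^ (k + 1 - a) * (y 0 ^ b * y 1 ^ (l + 1 - b))) := by
      rw [← Finset.sum_add_distrib]
      apply Finset.sum_congr rfl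
      intro a haa
      rw [← Finset.sum_add_distrib]
      apply Finset.sum_congr rfl
      intro b hbb
      rw [Finset.mem_range] at haa hbb
      exact hsplit a b (by omega) (by omega)
    rw [hstep]
    have hS1 : ∑ a ∈ Finset.range (k + 1 + 1), ∑ b ∈ Finset.range (l + 1 + 1),
        (if 1 ≤ a ∧ 1 ≤ b then uh (a - 1) (b - 1) else 0)
          * (x 0 ^ a * x 1 ^ (k + 1 - a) * (y 0 ^ b * y 1 ^ (l + 1 - b)))
        = ∑ a ∈ Finset.range (k + 1), ∑ b ∈ Finset.range (l + 1),
            uh a b * (x 0 ^ (a + 1) * x 1 ^ (k - a) * (y 0 ^ (b + 1) * y 1 ^ (l - b))) := by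
      rw [Finset.sum_range_succ' (fun a => ∑ b ∈ Finset.range (l + 1 + 1),
        (if 1 ≤ a ∧ 1 ≤ b then uh (a - 1) (b - 1) else 0)
          * (x 0 ^ a * x 1 ^ (k + 1 - a) * (y 0 ^ b * y 1 ^ (l + 1 - b)))) (k + 1)]
      have hzero : ∑ b ∈ Finset.range (l + 1 + 1),
          (if 1 ≤ 0 ∧ 1 ≤ b then uh (0 - 1) (b - 1) else 0)
            * (x 0 ^ 0 * x 1 ^ (k + 1 - 0) * (y 0 ^ b * y 1 ^ (l + 1 - b))) = 0 := by
        apply Finset.sum_eq_zero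
        intro b _
        simp
      rw [hzero, add_zero]
      apply Finset.sum_congr rfl
      intro a haa
      rw [Finset.mem_range] at haa
      rw [Finset.sum_range_succ' (fun b =>
        (if 1 ≤ a + 1 ∧ 1 ≤ b then uh (a + 1 - 1) (b - 1) else 0)
          * (x 0 ^ (a + 1) * x 1 ^ (k + 1 - (a + 1)) * (y 0 ^ b * y 1 ^ (l + 1 - b)))) (l + 1)]
      have hzero2 : (if 1 ≤ a + 1 ∧ 1 ≤ 0 then uh (a + 1 - 1) (0 - 1) else 0)
          * (x 0 ^ (a + 1) * x 1 ^ (k + 1 - (a + 1)) * (y 0 ^ 0 * y 1 ^ (l + 1 - 0))) = 0 := by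
        simp
      rw [hzero2, add_zero]
      apply Finset.sum_congr rfl
      intro b hbb
      rw [Finset.mem_range] at hbb
      rw [if_pos ⟨by omega, by omega⟩]
      rw [show a + 1 - 1 = a by omega, show b + 1 - 1 = b by omega,
        show k + 1 - (a + 1) = k - a by omega, show l + 1 - (b + 1) = l - b by omega]
    have hS2 : ∑ a ∈ Finset.range (k + 1 + 1), ∑ b ∈ Finset.range (l + 1 + 1),
        uh a b * (x 0 ^ a * x 1 ^ (k + 1 - a) * (y 0 ^ b * y 1 ^ (l + 1 - b)))
        = ∑ a ∈ Finset.range (k + 1), ∑ b ∈ Finset.range (l + 1),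
            uh a b * (x 0 ^ a * x 1 ^ (k + 1 - a) * (y 0 ^ b * y 1 ^ (l + 1 - b))) := by
      rw [Finset.sum_range_succ (fun a => ∑ b ∈ Finset.range (l + 1 + 1),
        uh a b * (x 0 ^ a * x 1 ^ (k + 1 - a) * (y 0 ^ b * y 1 ^ (l + 1 - b)))) (k + 1)]
      have hzero : ∑ b ∈ Finset.range (l + 1 + 1), uh (k + 1) b
          * (x 0 ^ (k + 1) * x 1 ^ (k + 1 - (k + 1)) * (y 0 ^ b * y 1 ^ (l + 1 - b))) = 0 := by
        apply Finset.sum_eq_zero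
        intro b _
        have : uh (k + 1) b = 0 := by
          rw [huh]
          simp only
          rw [if_neg (by omega)]
        rw [this, zero_mul]
      rw [hzero, add_zero]
      apply Finset.sum_congr rfl
      intro a _
      rw [Finset.sum_range_succ (fun b => uh a b
        * (x 0 ^ a * x 1 ^ (k + 1 - a) * (y 0 ^ b * y 1 ^ (l + 1 - b)))) (l + 1)]
      have hzero2 : uh a (l + 1)
          * (x 0 ^ a * x 1 ^ (k + 1 - a) * (y 0 ^ (l + 1) * y 1 ^ (l + 1 - (l + 1)))) = 0 := by
        have : uh a (l + 1) = 0 := by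
          rw [huh]
          simp only
          rw [if_neg (by omega)]
        rw [this, zero_mul]
      rw [hzero2, add_zero]
    rw [hS1, hS2]
    rw [Finset.mul_sum, ← Finset.sum_add_distrib]
    apply Finset.sum_congr rfl
    intro a haa
    rw [Finset.mul_sum, ← Finset.sum_add_distrib]
    apply Finset.sum_congr rfl
    intro b hbb
    rw [Finset.mem_range] at haa hbb
    rw [show k + 1 - a = (k - a) + 1 by omega, show l + 1 - b = (l - b) + 1 by omega]
    ring
  refine ⟨w, ?_⟩
  intro I J
  have hDsym : SymmIn (fun I J => T I J + (-1) * lam w I J) :=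
    SymmIn_add_smul T (lam w) (-1) hT (SymmIn_lam w)
  have hDe : ∀ I J, (fun I J => T I J + (-1) * lam w I J) I J
      = (fun a b => T (rep (k + 1) a) (rep (l + 1) b)
          + (-1) * lam w (rep (k + 1) a) (rep (l + 1) b)) (NJ I) (NJ J) :=
    fun I J => entry_reduce _ hDsym I J
  have hDE : ∀ x y : Fin 2 → ℝ, Ebi (fun I J => T I J + (-1) * lam w I J) x y = 0 := by
    intro x y
    rw [Ebi_add_smul, hET]
    ring
  have hd0 : ∀ a b, a < k + 1 + 1 → b < l + 1 + 1 →
      Nc (k + 1) a * Nc (l + 1) b * (T (rep (k + 1) a) (rep (l + 1) b)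
        + (-1) * lam w (rep (k + 1) a) (rep (l + 1) b)) = 0 := by
    apply poly_vanish2
    intro u v
    have h0 := hDE ![u, 1] ![v, 1]
    rw [Ebi_grouped (fun I J => T I J + (-1) * lam w I J)
      (fun a b => T (rep (k + 1) a) (rep (l + 1) b)
        + (-1) * lam w (rep (k + 1) a) (rep (l + 1) b)) hDe ![u, 1] ![v, 1]] at h0
    rw [← h0]
    apply Finset.sum_congr rfl
    intro a _
    apply Finset.sum_congr rfl
    intro b _
    have e0 : (![u, (1 : ℝ)]) 0 = u := rfl
    have e1 : (![u, (1 : ℝ)]) 1 = 1 := rfl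
    have g0 : (![v, (1 : ℝ)]) 0 = v := rfl
    have g1 : (![v, (1 : ℝ)]) 1 = 1 := rfl
    rw [e0, e1, g0, g1]
    ring
  have hNa : Nc (k + 1) (NJ I) ≠ 0 := Nc_ne_zero (NJ_le I)
  have hNb : Nc (l + 1) (NJ J) ≠ 0 := Nc_ne_zero (NJ_le J)
  have h4 := hd0 (NJ I) (NJ J) (by have := NJ_le I; omega) (by have := NJ_le J; omega)
  have h5 : T (rep (k + 1) (NJ I)) (rep (l + 1) (NJ J))
      + (-1) * lam w (rep (k + 1) (NJ I)) (rep (l + 1) (NJ J)) = 0 := by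
    rcases mul_eq_zero.mp h4 with h | h
    · rcases mul_eq_zero.mp h with h' | h'
      · exact absurd h' hNa
      · exact absurd h' hNb
    · exact h
  have h6 := hDe I J
  simp only at h6
  rw [h5] at h6
  linarith

/-- for every `(k,ℓ)`-tensor `f` (symmetric in each group, `k,ℓ ≥ 1`),
`f + (-1)^(ℓ+1) A(Sym(Af))` lies in the image of `λ`; i.e. `(-1)^ℓ A ∘ Sym ∘ A = id`
modulo `Im λ`. -/
theorem A_sym_A_identity_mod_lam (k l : ℕ) (f : Tens (k + 1) (l + 1)) (hf : SymmIn f) :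
    ∃ w : Tens k l, ∀ I J,
      f I J + (-1 : ℝ) ^ (l + 1 + 1) * opA (fromFull (Sym (toFull (opA f)))) I J
        = lam w I J := by
  have hsym : SymmIn (fun I J => f I J
      + (-1 : ℝ) ^ (l + 1 + 1) * opA (fromFull (Sym (toFull (opA f)))) I J) :=
    SymmIn_add_smul _ _ _ hf (SymmIn_opA _ (SymmIn_fromFull_Sym _))
  obtain ⟨w, hw⟩ := construct _ hsym (fun x => Ebi_Q_vanish f x)
  exact ⟨w, fun I J => hw I J⟩

end MRT
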